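/- First inequality of Theorem 1, pathwise pure-state form (quantum Fisher complexity is below Nielsen's cost): Let n ≥ 1, d = 2^n, and let U be a unitary path on ℂ^d with Hermitian generator G(s) and real Pauli coefficients h_f(s) = 2^{-n}·Re(tr(P(f)·G(s))). Then for every unit vector ψ₀ ∈ ℂ^d, ∫₀¹ √(Var_{U(s)ψ₀}(G(s))) ds ≤ ∫₀¹ Σ_f |h_f(s)| ds. (The left-hand side equals (1/2)∫₀¹ √(F_Q(s)) ds, where F_Q(s) = 4·Var_{U(s)ψ₀}(G(s)) is the pure-state quantum Fisher information of the path.) -/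

import Mathlib

/-!
STATEMENT 1: First inequality of Theorem 1, pathwise pure-state form (quantum Fisher
complexity is below Nielsen's cost):
`∫₀¹ √(Var_{U(s)ψ₀}(G(s))) ds ≤ ∫₀¹ Σ_f |h_f(s)| ds`.
-/

noncomputable section

open Matrix MeasureTheory Set
open scoped Matrix.Norms.L2Operator

/-- The 2×2 identity and the Pauli matrices X, Y, Z. -/
def pauli : Fin 4 → Matrix (Fin 2) (Fin 2) ℂ
  | 0 => 1
  | 1 => !![0, 1; 1, 0]
  | 2 => !![0, -Complex.I; Complex.I, 0]
  | 3 => !![1, 0; 0, -1]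

/-- The `n`-qubit Pauli string `P(f)` indexed by `f : Fin n → Fin 4`. -/
def pauliString {n : ℕ} (f : Fin n → Fin 4) :
    Matrix (Fin n → Fin 2) (Fin n → Fin 2) ℂ :=
  Matrix.of fun x y => ∏ j, pauli (f j) (x j) (y j)

/-- The (Hermitian) generator `G(s) = i • (U'(s)) * (U(s))ᴴ` of a unitary path. -/
def generator {ι : Type*} [Fintype ι] [DecidableEq ι]
    (U : ℝ → Matrix ι ι ℂ) (s : ℝ) : Matrix ι ι ℂ :=
  Complex.I • (deriv U s * (U s)ᴴ)

/-- The real Pauli coefficients `h_f(s) = 2^{-n} · Re(tr(P(f) · G(s)))` of the generator. -/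
def pauliCoeff {n : ℕ} (U : ℝ → Matrix (Fin n → Fin 2) (Fin n → Fin 2) ℂ)
    (f : Fin n → Fin 4) (s : ℝ) : ℝ :=
  ((2 : ℝ) ^ n)⁻¹ * ((pauliString f * generator U s).trace).re

/-- The standard complex inner product `⟨φ, χ⟩ = Σ_i conj(φ i) * χ i` on `ι → ℂ`. -/
def cinner {ι : Type*} [Fintype ι] (φ χ : ι → ℂ) : ℂ := ∑ i, star (φ i) * χ i

/-- The variance `Var_ψ(A) = ⟨ψ, A²ψ⟩ − ⟨ψ, Aψ⟩²` of a (Hermitian) matrix `A` in a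
unit vector `ψ` (real, since `A` is Hermitian). -/
def matVar {ι : Type*} [Fintype ι] (A : Matrix ι ι ℂ) (ψ : ι → ℂ) : ℝ :=
  (cinner ψ ((A * A).mulVec ψ)).re - ((cinner ψ (A.mulVec ψ)).re) ^ 2

/-!
Expand the Hermitian generator as `G = Σ_f h_f • P(f)`. Pauli strings are Hermitian
involutions, hence unitary, so the triangle inequality gives `‖Gψ‖ ≤ Σ_f |h_f|` for every unit
vector `ψ`, while `Var_ψ(G) ≤ ⟨ψ, G²ψ⟩ = ‖Gψ‖²`. This pointwise bound integrates because the cost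
is continuous in `s`; the left-hand side is nonnegative, so its integrability is not needed.
-/

namespace Matrix

variable {ι κ R : Type*} [Fintype ι] [CommSemiring R]

def piTensor (M : ι → Matrix κ κ R) : Matrix (ι → κ) (ι → κ) R :=
  of fun x y => ∏ j, M j (x j) (y j)

lemma piTensor_mul [DecidableEq ι] [Fintype κ] (M N : ι → Matrix κ κ R) :
    piTensor M * piTensor N = piTensor (M * N) := by
  ext x y
  simp only [piTensor, mul_apply, of_apply, Pi.mul_apply, ← Finset.prod_mul_distrib,
    Fintype.prod_sum]

lemma piTensor_one [DecidableEq κ] : piTensor (fun _ : ι => (1 : Matrix κ κ R)) = 1 := by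
  ext x y
  simp only [piTensor, of_apply, one_apply, Finset.prod_boole, Finset.mem_univ, forall_const,
    funext_iff]

lemma conjTranspose_piTensor [StarRing R] (M : ι → Matrix κ κ R) :
    (piTensor M)ᴴ = piTensor fun j => (M j)ᴴ := by
  ext x y
  simp [piTensor, star_prod]

end Matrix

lemma pauliString_eq_piTensor {n : ℕ} (f : Fin n → Fin 4) :
    pauliString f = piTensor fun j => pauli (f j) := rfl

lemma pauli_conjTranspose (k : Fin 4) : (pauli k)ᴴ = pauli k := by
  ext a b
  fin_cases k <;> fin_cases a <;> fin_cases b <;> simp [pauli]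

lemma pauli_mul_self (k : Fin 4) : pauli k * pauli k = 1 := by
  ext a b
  fin_cases k <;> fin_cases a <;> fin_cases b <;> simp [pauli, mul_apply, one_apply]

lemma sum_pauli_mul_pauli (a b c d : Fin 2) :
    ∑ k, pauli k a b * pauli k c d = if a = d ∧ b = c then 2 else 0 := by
  fin_cases a <;> fin_cases b <;> fin_cases c <;> fin_cases d <;>
    simp [Fin.sum_univ_four, pauli] <;> norm_num

lemma pauliString_isHermitian {n : ℕ} (f : Fin n → Fin 4) : (pauliString f).IsHermitian := by
  simp only [IsHermitian, pauliString_eq_piTensor, conjTranspose_piTensor, pauli_conjTranspose]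

lemma pauliString_mul_self {n : ℕ} (f : Fin n → Fin 4) : pauliString f * pauliString f = 1 := by
  rw [pauliString_eq_piTensor, piTensor_mul]
  simp only [Pi.mul_def, pauli_mul_self, piTensor_one]

lemma sum_pauliString_mul_pauliString {n : ℕ} (z w x y : Fin n → Fin 2) :
    ∑ f : Fin n → Fin 4, pauliString f z w * pauliString f x y =
      if z = y ∧ w = x then 2 ^ n else 0 := by
  simp only [pauliString, of_apply, ← Finset.prod_mul_distrib]
  rw [← Fintype.prod_sum fun j k => pauli k (z j) (w j) * pauli k (x j) (y j)]
  simp only [sum_pauli_mul_pauli, Fintype.prod_ite_zero, Finset.prod_const, Finset.card_univ,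
    Fintype.card_fin, forall_and, ← funext_iff]

lemma sum_trace_mul_smul_pauliString {n : ℕ} (A : Matrix (Fin n → Fin 2) (Fin n → Fin 2) ℂ) :
    ∑ f : Fin n → Fin 4, (pauliString f * A).trace • pauliString f = (2 ^ n : ℂ) • A := by
  ext x y
  simp only [Matrix.sum_apply, Matrix.smul_apply, trace, diag, mul_apply, smul_eq_mul,
    Finset.sum_mul]
  calc ∑ f : Fin n → Fin 4, ∑ i, ∑ j, pauliString f i j * A j i * pauliString f x y
      = ∑ i, ∑ j, A j i * ∑ f : Fin n → Fin 4, pauliString f i j * pauliString f x y := by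
        simp only [Finset.mul_sum]
        rw [Finset.sum_comm]
        refine Finset.sum_congr rfl fun i _ => ?_
        rw [Finset.sum_comm]
        refine Finset.sum_congr rfl fun j _ => Finset.sum_congr rfl fun f _ => by ring
    _ = 2 ^ n * A x y := by
        simp [sum_pauliString_mul_pauliString, mul_comm, ite_and]

lemma Matrix.IsHermitian.coe_re_trace_mul {ι : Type*} [Fintype ι] {A B : Matrix ι ι ℂ}
    (hA : A.IsHermitian) (hB : B.IsHermitian) : ((A * B).trace.re : ℂ) = (A * B).trace := by
  rw [← Complex.conj_eq_iff_re, ← Complex.star_def, ← trace_conjTranspose, conjTranspose_mul,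
    hA.eq, hB.eq, trace_mul_comm]

lemma Matrix.IsHermitian.eq_sum_pauliString {n : ℕ}
    {A : Matrix (Fin n → Fin 2) (Fin n → Fin 2) ℂ} (hA : A.IsHermitian) :
    A = ∑ f : Fin n → Fin 4,
      ((((2 : ℝ) ^ n)⁻¹ * (pauliString f * A).trace.re : ℝ) : ℂ) • pauliString f := by
  have h2n : (2 ^ n : ℂ) ≠ 0 := pow_ne_zero n two_ne_zero
  simp only [Complex.ofReal_mul, (pauliString_isHermitian _).coe_re_trace_mul hA, ← smul_smul,
    ← Finset.smul_sum, sum_trace_mul_smul_pauliString]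
  push_cast
  rw [smul_smul, inv_mul_cancel₀ h2n, one_smul]

section Variance

variable {ι : Type*} [Fintype ι]

lemma cinner_eq_star_dotProduct (φ χ : ι → ℂ) : cinner φ χ = star φ ⬝ᵥ χ := rfl

lemma cinner_eq_inner (φ χ : ι → ℂ) :
    cinner φ χ = inner ℂ (WithLp.toLp 2 φ) (WithLp.toLp 2 χ) := by
  simp [cinner, PiLp.inner_apply, mul_comm]

lemma re_cinner_self (φ : ι → ℂ) : (cinner φ φ).re = ‖WithLp.toLp 2 φ‖ ^ 2 := by
  rw [cinner_eq_inner, ← inner_self_eq_norm_sq (𝕜 := ℂ), RCLike.re_to_complex]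

lemma cinner_conjTranspose_mul_mulVec (A B : Matrix ι ι ℂ) (ψ : ι → ℂ) :
    cinner ψ ((Aᴴ * B) *ᵥ ψ) = cinner (A *ᵥ ψ) (B *ᵥ ψ) := by
  rw [cinner_eq_star_dotProduct, cinner_eq_star_dotProduct, ← mulVec_mulVec, dotProduct_mulVec,
    star_mulVec]

lemma norm_mulVec_of_conjTranspose_mul_self [DecidableEq ι] {U : Matrix ι ι ℂ}
    (hU : Uᴴ * U = 1) (ψ : ι → ℂ) : ‖WithLp.toLp 2 (U *ᵥ ψ)‖ = ‖WithLp.toLp 2 ψ‖ := by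
  rw [← sq_eq_sq₀ (norm_nonneg _) (norm_nonneg _), ← re_cinner_self, ← re_cinner_self,
    ← cinner_conjTranspose_mul_mulVec, hU, one_mulVec]

lemma sqrt_matVar_le_norm_mulVec {A : Matrix ι ι ℂ} (hA : A.IsHermitian) (ψ : ι → ℂ) :
    √(matVar A ψ) ≤ ‖WithLp.toLp 2 (A *ᵥ ψ)‖ := by
  have hVar : matVar A ψ ≤ ‖WithLp.toLp 2 (A *ᵥ ψ)‖ ^ 2 := by
    rw [← re_cinner_self, ← cinner_conjTranspose_mul_mulVec, hA.eq, matVar]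
    linarith [sq_nonneg (cinner ψ (A *ᵥ ψ)).re]
  simpa using Real.sqrt_le_sqrt hVar

lemma sqrt_matVar_le_of_eq_sum_smul [DecidableEq ι] {α : Type*} [Fintype α]
    {A : Matrix ι ι ℂ} (hA : A.IsHermitian) {c : α → ℂ} {P : α → Matrix ι ι ℂ}
    (hP : ∀ a, (P a)ᴴ * P a = 1) (hAP : A = ∑ a, c a • P a) (ψ : ι → ℂ) :
    √(matVar A ψ) ≤ (∑ a, ‖c a‖) * ‖WithLp.toLp 2 ψ‖ := by
  calc √(matVar A ψ) ≤ ‖WithLp.toLp 2 (A *ᵥ ψ)‖ := sqrt_matVar_le_norm_mulVec hA ψ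
    _ = ‖∑ a, c a • WithLp.toLp 2 (P a *ᵥ ψ)‖ := by
      simp only [hAP, sum_mulVec, smul_mulVec, WithLp.toLp_sum, WithLp.toLp_smul]
    _ ≤ ∑ a, ‖c a • WithLp.toLp 2 (P a *ᵥ ψ)‖ := norm_sum_le _ _
    _ = (∑ a, ‖c a‖) * ‖WithLp.toLp 2 ψ‖ := by
      simp only [norm_smul, norm_mulVec_of_conjTranspose_mul_self (hP _), Finset.sum_mul]

end Variance

lemma intervalIntegral.integral_mono_on_of_nonneg {f g : ℝ → ℝ} {a b : ℝ} (hab : a ≤ b)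
    (hf : ∀ x ∈ Icc a b, 0 ≤ f x) (hg : IntervalIntegrable g volume a b)
    (h : ∀ x ∈ Icc a b, f x ≤ g x) : ∫ x in a..b, f x ≤ ∫ x in a..b, g x := by
  by_cases hfi : IntervalIntegrable f volume a b
  · exact intervalIntegral.integral_mono_on hab hfi hg h
  · rw [intervalIntegral.integral_undef hfi]
    exact intervalIntegral.integral_nonneg hab fun x hx => (hf x hx).trans (h x hx)

section UnitaryPath

variable {ι : Type*} [Fintype ι] [DecidableEq ι] {U : ℝ → Matrix ι ι ℂ} {S : Set ℝ}

lemma deriv_mul_conjTranspose_add_eq_zero {s : ℝ} (hU : DifferentiableAt ℝ U s)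
    (hS : UniqueDiffWithinAt ℝ S s) (hs : s ∈ S) (hunit : ∀ t ∈ S, U t * (U t)ᴴ = 1) :
    deriv U s * (U s)ᴴ + U s * (deriv U s)ᴴ = 0 := by
  have hprod : HasDerivAt (fun t => U t * (U t)ᴴ)
      (deriv U s * (U s)ᴴ + U s * (deriv U s)ᴴ) s :=
    hU.hasDerivAt.mul hU.hasDerivAt.star
  exact hS.eq_deriv _ hprod.hasDerivWithinAt
    ((hasDerivWithinAt_const s S 1).congr hunit (hunit s hs))

lemma generator_isHermitian {s : ℝ} (hU : DifferentiableAt ℝ U s)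
    (hS : UniqueDiffWithinAt ℝ S s) (hs : s ∈ S) (hunit : ∀ t ∈ S, U t * (U t)ᴴ = 1) :
    (generator U s).IsHermitian := by
  have hskew : U s * (deriv U s)ᴴ = -(deriv U s * (U s)ᴴ) :=
    eq_neg_of_add_eq_zero_right (deriv_mul_conjTranspose_add_eq_zero hU hS hs hunit)
  rw [IsHermitian, generator, conjTranspose_smul, conjTranspose_mul,
    conjTranspose_conjTranspose, hskew, smul_neg, ← neg_smul, Complex.star_def, Complex.conj_I,
    neg_neg]

lemma continuousOn_generator (hU : ∀ s ∈ S, DifferentiableAt ℝ U s)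
    (hU' : ContinuousOn (deriv U) S) : ContinuousOn (generator U) S := by
  have hUH : ContinuousOn (fun s => (U s)ᴴ) S :=
    continuous_id.matrix_conjTranspose.comp_continuousOn
      fun s hs => (hU s hs).continuousAt.continuousWithinAt
  exact (hU'.mul hUH).const_smul Complex.I

end UnitaryPath

lemma continuousOn_pauliCoeff {n : ℕ} {U : ℝ → Matrix (Fin n → Fin 2) (Fin n → Fin 2) ℂ}
    {S : Set ℝ} (hG : ContinuousOn (generator U) S) (f : Fin n → Fin 4) :
    ContinuousOn (pauliCoeff U f) S :=
  continuousOn_const.mul (Complex.continuous_re.comp_continuousOn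
    (continuous_id.matrix_trace.comp_continuousOn (continuousOn_const.mul hG)))

theorem qfc_below_nielsen_cost_general (n : ℕ)
    (U : ℝ → Matrix (Fin n → Fin 2) (Fin n → Fin 2) ℂ)
    (hUdiff : ∀ s ∈ Icc (0:ℝ) 1, DifferentiableAt ℝ U s)
    (hUderiv : ContinuousOn (deriv U) (Icc (0:ℝ) 1))
    (hUunit : ∀ s ∈ Icc (0:ℝ) 1, U s * (U s)ᴴ = 1)
    (ψ₀ : (Fin n → Fin 2) → ℂ) (hψ₀ : cinner ψ₀ ψ₀ = 1) :
    (∫ s in (0:ℝ)..1, Real.sqrt (matVar (generator U s) ((U s).mulVec ψ₀))) ≤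
      ∫ s in (0:ℝ)..1, ∑ f : Fin n → Fin 4, |pauliCoeff U f s| := by
  have hcost : ContinuousOn (fun s => ∑ f : Fin n → Fin 4, |pauliCoeff U f s|) (Icc 0 1) :=
    continuousOn_finsetSum _ fun f _ =>
      (continuousOn_pauliCoeff (continuousOn_generator hUdiff hUderiv) f).abs
  have hψ₀_norm : ‖WithLp.toLp 2 ψ₀‖ = 1 := by
    rw [← pow_eq_one_iff_of_nonneg (norm_nonneg _) two_ne_zero, ← re_cinner_self, hψ₀,
      Complex.one_re]
  refine intervalIntegral.integral_mono_on_of_nonneg zero_le_one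
    (fun _ _ => Real.sqrt_nonneg _) (hcost.intervalIntegrable_of_Icc zero_le_one) fun s hs => ?_
  have hG := generator_isHermitian (hUdiff s hs) (uniqueDiffOn_Icc zero_lt_one s hs) hs hUunit
  have hPauli (f : Fin n → Fin 4) : (pauliString f)ᴴ * pauliString f = 1 := by
    rw [(pauliString_isHermitian f).eq, pauliString_mul_self]
  calc √(matVar (generator U s) (U s *ᵥ ψ₀))
      ≤ (∑ f, ‖(pauliCoeff U f s : ℂ)‖) * ‖WithLp.toLp 2 (U s *ᵥ ψ₀)‖ :=
        sqrt_matVar_le_of_eq_sum_smul hG hPauli hG.eq_sum_pauliString _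
    _ = ∑ f, |pauliCoeff U f s| := by
        rw [norm_mulVec_of_conjTranspose_mul_self (mul_eq_one_comm.mp (hUunit s hs)), hψ₀_norm]
        simp

theorem qfc_below_nielsen_cost (n : ℕ) (hn : 1 ≤ n)
    (U : ℝ → Matrix (Fin n → Fin 2) (Fin n → Fin 2) ℂ)
    (hUdiff : ∀ s ∈ Icc (0:ℝ) 1, DifferentiableAt ℝ U s)
    (hUderiv : ContinuousOn (deriv U) (Icc (0:ℝ) 1))
    (hUunit : ∀ s ∈ Icc (0:ℝ) 1, U s * (U s)ᴴ = 1)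
    (hU0 : U 0 = 1)
    (ψ₀ : (Fin n → Fin 2) → ℂ) (hψ₀ : cinner ψ₀ ψ₀ = 1) :
    (∫ s in (0:ℝ)..1, Real.sqrt (matVar (generator U s) ((U s).mulVec ψ₀))) ≤
      ∫ s in (0:ℝ)..1, ∑ f : Fin n → Fin 4, |pauliCoeff U f s| :=
  qfc_below_nielsen_cost_general n U hUdiff hUderiv hUunit ψ₀ hψ₀
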